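/- arXiv:2303.07613 — 4 statements merged into one kernel-verified Lean document; each statement's English description precedes it below -/
import Mathlib

section
/- Let k ≥ 2 be an integer. For every ε > 0 there exists a constant C > 0 such that for every positive integer n, the number R_{k,2}(n) of ordered pairs of positive integers (a,b) with a^k + b^k = n satisfies R_{k,2}(n) ≤ C · n^ε. -/
/-!
Even exponents reduce to `k = 2` via `(a, b) ↦ (a ^ (k / 2), b ^ (k / 2))`. For odd `k`, `a + b`
divides `a ^ k + b ^ k`, and by strict convexity of `x ↦ x ^ k` the sum `a + b` together with the
order of `a` and `b` determines `(a, b)`; hence `R_{k,2}(n) ≤ 2 d(n)`.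

For `k = 2`, write `a = g a'`, `b = g b'` with `g = gcd(a, b)`. The primitive representation
`(a', b')` of `m = n / g²` is determined by the residue `a' / b'`, a square root of `-1` modulo
`m`. Multiplying by one such root `r` sends square roots of `-1` injectively to square roots of
`1`, and on those `y ↦ (gcd(m, y - 1), gcd(m, y + 1))` is at most two-to-one, since it determines
`y` modulo an `L` with `m ≤ 2 L`. Hence `R_{2,2}(n) ≤ 2 d(n)³`, and the divisor bound
`d(n) ≪_ε n ^ ε` finishes the proof.
-/

open Finset

theorem add_one_le_mul_pow {x : ℝ} (hx : 1 < x) (e : ℕ) :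
    (e + 1 : ℝ) ≤ (1 + (x - 1)⁻¹) * x ^ e := by
  have hbern : 1 + e * (x - 1) ≤ x ^ e := by
    simpa using one_add_mul_le_pow (a := x - 1) (by linarith) e
  have hx1 : 0 < x - 1 := by linarith
  calc (e + 1 : ℝ) ≤ (1 + (x - 1)⁻¹) * (1 + e * (x - 1)) := by
        field_simp
        nlinarith [mul_nonneg (Nat.cast_nonneg e : (0 : ℝ) ≤ e) (sq_nonneg (x - 1))]
    _ ≤ (1 + (x - 1)⁻¹) * x ^ e := by gcongr

theorem Nat.card_divisors_le_prod_mul_rpow {n : ℕ} (hn : n ≠ 0) {ε : ℝ} (c : ℕ → ℝ)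
    (hc : ∀ p, p.Prime → ∀ e : ℕ, (e + 1 : ℝ) ≤ c p * ((p : ℝ) ^ ε) ^ e) :
    (#n.divisors : ℝ) ≤ (∏ p ∈ n.primeFactors, c p) * (n : ℝ) ^ ε := by
  have hn_prod :
      (n : ℝ) ^ ε = ∏ p ∈ n.primeFactors, ((p : ℝ) ^ ε) ^ n.factorization p := by
    conv_lhs => rw [← Nat.prod_factorization_pow_eq_self hn]
    rw [Finsupp.prod, Nat.support_factorization, Nat.cast_prod,
      ← Real.finsetProd_rpow _ _ (fun _ _ => by positivity)]
    refine prod_congr rfl fun p _ => ?_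
    rw [Nat.cast_pow, Real.rpow_pow_comm (Nat.cast_nonneg p)]
  rw [Nat.card_divisors hn, hn_prod, ← prod_mul_distrib]
  push_cast
  exact prod_le_prod (fun _ _ => by positivity) fun p hp =>
    hc p (Nat.prime_of_mem_primeFactors hp) _

theorem Nat.card_divisors_le_mul_rpow {ε : ℝ} (hε : 0 < ε) :
    ∃ C : ℝ, 0 < C ∧ ∀ n : ℕ, (#n.divisors : ℝ) ≤ C * (n : ℝ) ^ ε := by
  set M : ℝ := 1 + ((2 : ℝ) ^ ε - 1)⁻¹
  set K : ℕ := ⌈(2 : ℝ) ^ ε⁻¹⌉₊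
  have h2ε : 1 < (2 : ℝ) ^ ε := Real.one_lt_rpow (by norm_num) hε
  have hM : 1 ≤ M := le_add_of_nonneg_right (inv_nonneg.mpr (by linarith))
  refine ⟨M ^ K, by positivity, fun n => ?_⟩
  rcases eq_or_ne n 0 with rfl | hn
  · simp [Real.zero_rpow hε.ne']
  -- Primes `p ≥ 2 ^ ε⁻¹` have `p ^ ε ≥ 2`, and there `e + 1 ≤ 2 ^ e` needs no constant.
  let c : ℕ → ℝ := fun p => if p < K then M else 1
  have hc : ∀ p, p.Prime → ∀ e : ℕ, (e + 1 : ℝ) ≤ c p * ((p : ℝ) ^ ε) ^ e := by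
    intro p hp e
    have hp2 : (2 : ℝ) ≤ p := by exact_mod_cast hp.two_le
    by_cases hpK : p < K
    · calc (e + 1 : ℝ) ≤ M * ((2 : ℝ) ^ ε) ^ e := add_one_le_mul_pow h2ε e
        _ ≤ c p * ((p : ℝ) ^ ε) ^ e := by simp only [c, if_pos hpK]; gcongr
    · have hKp : (2 : ℝ) ≤ (p : ℝ) ^ ε := by
        rw [← Real.rpow_inv_le_iff_of_pos (by norm_num) (by positivity) hε]
        exact (Nat.le_ceil _).trans (by exact_mod_cast not_lt.mp hpK)
      calc (e + 1 : ℝ) ≤ 2 ^ e := by exact_mod_cast Nat.lt_two_pow_self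
        _ ≤ c p * ((p : ℝ) ^ ε) ^ e := by simp only [c, if_neg hpK, one_mul]; gcongr
  have hprod : ∏ p ∈ n.primeFactors, c p ≤ M ^ K := by
    rw [prod_ite, prod_const, prod_const_one, mul_one]
    refine pow_le_pow_right₀ hM ((card_le_card fun p hp => ?_).trans (card_range K).le)
    exact mem_range.mpr (mem_filter.mp hp).2
  calc (#n.divisors : ℝ) ≤ (∏ p ∈ n.primeFactors, c p) * (n : ℝ) ^ ε :=
        Nat.card_divisors_le_prod_mul_rpow hn c hc
    _ ≤ M ^ K * (n : ℝ) ^ ε := by gcongr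

theorem StrictConvexOn.map_add_map_lt {s : Set ℝ} {f : ℝ → ℝ} (hf : StrictConvexOn ℝ s f)
    {a b c d : ℝ} (ha : a ∈ s) (hb : b ∈ s) (hac : a < c) (hcb : c < b) (h : a + b = c + d) :
    f c + f d < f a + f b := by
  set θ := (b - c) / (b - a)
  have hba : 0 < b - a := by linarith
  have hθ : 0 < θ := div_pos (by linarith) hba
  have hθ' : 0 < 1 - θ := by rw [sub_pos, div_lt_one hba]; linarith
  have hc : θ • a + (1 - θ) • b = c := by simp only [θ, smul_eq_mul]; field_simp; ring
  have hd : (1 - θ) • a + θ • b = d := by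
    rw [show d = a + b - c by linarith]; simp only [θ, smul_eq_mul]; field_simp; ring
  have h₁ := hf.2 ha hb (hac.trans hcb).ne hθ hθ' (by ring)
  have h₂ := hf.2 ha hb (hac.trans hcb).ne hθ' hθ (by ring)
  rw [hc, smul_eq_mul, smul_eq_mul] at h₁
  rw [hd, smul_eq_mul, smul_eq_mul] at h₂
  linarith

theorem Nat.pow_add_pow_lt {k : ℕ} (hk : 2 ≤ k) {a b c d : ℕ} (hac : a < c) (hcb : c < b)
    (h : a + b = c + d) : c ^ k + d ^ k < a ^ k + b ^ k := by
  have := (strictConvexOn_pow hk).map_add_map_lt (c := c) (d := d)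
    (Set.mem_Ici.mpr (Nat.cast_nonneg a)) (Set.mem_Ici.mpr (Nat.cast_nonneg b))
    (by exact_mod_cast hac) (by exact_mod_cast hcb) (by exact_mod_cast h)
  exact_mod_cast this

theorem Nat.eq_of_add_eq_of_pow_add_pow_eq {k : ℕ} (hk : 2 ≤ k) {a b c d : ℕ} (hab : a ≤ b)
    (hcd : c ≤ d) (h : a + b = c + d) (hpow : a ^ k + b ^ k = c ^ k + d ^ k) : a = c := by
  rcases lt_trichotomy a c with hac | rfl | hca
  · have := Nat.pow_add_pow_lt hk hac (by omega) h; omega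
  · rfl
  · have := Nat.pow_add_pow_lt hk hca (by omega) h.symm; omega

theorem ZMod.dvd_val_sub {m d : ℕ} [NeZero m] (hd : d ∣ m) {x y : ZMod m} (hx : d ∣ x.val)
    (hy : d ∣ y.val) : d ∣ (x - y).val := by
  have hcast : ∀ z : ZMod m, d ∣ z.val ↔ ZMod.castHom hd (ZMod d) z = 0 := fun z => by
    rw [ZMod.castHom_apply, ZMod.cast_eq_val, ZMod.natCast_eq_zero_iff]
  rw [hcast] at hx hy ⊢
  rw [map_sub, hx, hy, sub_zero]

theorem ZMod.le_two_mul_lcm_of_sq_eq_one {m : ℕ} [NeZero m] {y : ZMod m} (hy : y ^ 2 = 1) :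
    m ≤ 2 * (m.gcd (y - 1).val).lcm (m.gcd (y + 1).val) := by
  set d₁ := m.gcd (y - 1).val
  set d₂ := m.gcd (y + 1).val
  have hm : m ∣ d₁ * d₂ := by
    refine Nat.dvd_gcd_mul_gcd_iff_dvd_mul.mpr ((ZMod.natCast_eq_zero_iff _ _).mp ?_)
    rw [Nat.cast_mul, ZMod.natCast_zmod_val, ZMod.natCast_zmod_val]
    linear_combination hy
  have hgcd : d₁.gcd d₂ ∣ 2 := by
    have hg : d₁.gcd d₂ ∣ m := (Nat.gcd_dvd_left _ _).trans (Nat.gcd_dvd_left _ _)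
    have := ZMod.dvd_val_sub hg ((Nat.gcd_dvd_right _ _).trans (Nat.gcd_dvd_right m _))
      ((Nat.gcd_dvd_left _ _).trans (Nat.gcd_dvd_right m _))
    rwa [add_sub_sub_cancel, one_add_one_eq_two, ZMod.val_two_eq_two_mod,
      Nat.dvd_mod_iff hg] at this
  have hpos : 0 < d₁ * d₂ := Nat.mul_pos (Nat.gcd_pos_of_pos_left _ (NeZero.pos m))
    (Nat.gcd_pos_of_pos_left _ (NeZero.pos m))
  calc m ≤ d₁ * d₂ := Nat.le_of_dvd hpos hm
    _ = d₁.gcd d₂ * d₁.lcm d₂ := (Nat.gcd_mul_lcm d₁ d₂).symm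
    _ ≤ 2 * d₁.lcm d₂ := Nat.mul_le_mul_right _ (Nat.le_of_dvd two_pos hgcd)

theorem ZMod.card_sq_eq_one_le (m : ℕ) [NeZero m] :
    #{y : ZMod m | y ^ 2 = 1} ≤ 2 * #m.divisors ^ 2 := by
  set s : Finset (ZMod m) := {y | y ^ 2 = 1}
  let f : ZMod m → ℕ × ℕ := fun y => (m.gcd (y - 1).val, m.gcd (y + 1).val)
  have hfibre : ∀ b ∈ s.image f, #{y ∈ s | f y = b} ≤ 2 := by
    simp only [mem_image]
    rintro _ ⟨y₀, hy₀, rfl⟩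
    set L := (m.gcd (y₀ - 1).val).lcm (m.gcd (y₀ + 1).val)
    have hmL : m ≤ 2 * L := ZMod.le_two_mul_lcm_of_sq_eq_one (mem_filter.mp hy₀).2
    refine (card_le_card fun y hy => ?_).trans (card_le_two (a := y₀) (b := y₀ + L))
    simp only [f, mem_filter, Prod.mk.injEq] at hy
    obtain ⟨-, hy₁, hy₂⟩ := hy
    have hL : L ∣ (y - y₀).val := by
      refine Nat.lcm_dvd ?_ ?_
      · have := ZMod.dvd_val_sub (Nat.gcd_dvd_left m _)
          (hy₁ ▸ Nat.gcd_dvd_right m (y - 1).val) (Nat.gcd_dvd_right m (y₀ - 1).val)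
        rwa [sub_sub_sub_cancel_right] at this
      · have := ZMod.dvd_val_sub (Nat.gcd_dvd_left m _)
          (hy₂ ▸ Nat.gcd_dvd_right m (y + 1).val) (Nat.gcd_dvd_right m (y₀ + 1).val)
        rwa [add_sub_add_right_eq_sub] at this
    obtain ⟨q, hq⟩ := hL
    have hq01 : q = 0 ∨ q = 1 := by
      have hlt : L * q < L * 2 :=
        hq ▸ (ZMod.val_lt (y - y₀)).trans_le (hmL.trans_eq (mul_comm _ _))
      have : q < 2 := lt_of_mul_lt_mul_left hlt (Nat.zero_le L)
      omega
    rw [mem_insert, mem_singleton]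
    rcases hq01 with rfl | rfl
    · left
      rwa [mul_zero, ZMod.val_eq_zero, sub_eq_zero] at hq
    · right
      rw [← sub_add_cancel y y₀, ← ZMod.natCast_zmod_val (y - y₀), hq, mul_one, add_comm]
  calc #s ≤ 2 * #(s.image f) := card_le_mul_card_image s 2 hfibre
    _ ≤ 2 * #m.divisors ^ 2 := by
      rw [sq, ← card_product]
      refine Nat.mul_le_mul_left 2 (card_le_card fun b hb => ?_)
      obtain ⟨y, -, rfl⟩ := mem_image.mp hb
      simp only [f, mem_product, Nat.mem_divisors]
      exact ⟨⟨Nat.gcd_dvd_left _ _, NeZero.ne m⟩, Nat.gcd_dvd_left _ _, NeZero.ne m⟩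

theorem ZMod.card_sq_eq_neg_one_le_card_sq_eq_one (m : ℕ) [NeZero m] :
    #{z : ZMod m | z ^ 2 = -1} ≤ #{y : ZMod m | y ^ 2 = 1} := by
  rcases eq_empty_or_nonempty {z : ZMod m | z ^ 2 = -1} with h | ⟨r, hr⟩
  · simp [h]
  rw [mem_filter] at hr
  have hr_unit : IsUnit r := IsUnit.of_mul_eq_one (-r) (by linear_combination -hr.2)
  refine card_le_card_of_injOn (· * r) (fun z hz => ?_) fun z _ w _ hzw =>
    hr_unit.mul_right_cancel hzw
  simp only [coe_filter, Set.mem_ofPred_eq, mem_univ, true_and] at hz ⊢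
  linear_combination r ^ 2 * hz - hr.2

theorem Nat.eq_of_sq_add_sq_eq_of_mul_modEq {a b c d m : ℕ} (ha : 0 < a) (hb : 0 < b)
    (hc : 0 < c) (hd : 0 < d) (hab : a ^ 2 + b ^ 2 = m) (hcd : c ^ 2 + d ^ 2 = m)
    (h : a * d ≡ c * b [MOD m]) : a = c ∧ b = d := by
  have hlt : ∀ {x y u v : ℕ}, x ^ 2 + u ^ 2 = m → v ^ 2 + y ^ 2 = m → 0 < u → 0 < v →
      x * y < m := fun {x y u v} hxu hvy hu hv => by nlinarith [pow_pos hu 2, pow_pos hv 2]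
  have had : a * d = c * b :=
    Nat.ModEq.eq_of_lt_of_lt h (hlt hab hcd hb hc) (hlt hcd hab hd ha)
  have hsq : a ^ 2 * m = c ^ 2 * m := by
    calc a ^ 2 * m = (a * c) ^ 2 + (a * d) ^ 2 := by rw [← hcd]; ring
      _ = (a * c) ^ 2 + (c * b) ^ 2 := by rw [had]
      _ = c ^ 2 * m := by rw [← hab]; ring
  have hac : a = c :=
    Nat.pow_left_injective two_ne_zero (Nat.eq_of_mul_eq_mul_right (by nlinarith) hsq)
  subst hac
  exact ⟨rfl, Nat.pow_left_injective two_ne_zero (show b ^ 2 = d ^ 2 by omega)⟩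

/-- The pairs counted by `R_{k,2}(n)`. -/
def reps (k n : ℕ) : Finset (ℕ × ℕ) :=
  {p ∈ Icc 1 n ×ˢ Icc 1 n | p.1 ^ k + p.2 ^ k = n}

theorem mem_reps {k n : ℕ} (hk : k ≠ 0) {p : ℕ × ℕ} :
    p ∈ reps k n ↔ 0 < p.1 ∧ 0 < p.2 ∧ p.1 ^ k + p.2 ^ k = n := by
  have h₁ := Nat.le_self_pow hk p.1
  have h₂ := Nat.le_self_pow hk p.2
  simp only [reps, mem_filter, mem_product, mem_Icc]
  omega

theorem natCard_eq_card_reps {k : ℕ} (hk : k ≠ 0) (n : ℕ) :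
    Nat.card {p : ℕ × ℕ // 0 < p.1 ∧ 0 < p.2 ∧ p.1 ^ k + p.2 ^ k = n} = #(reps k n) := by
  simp_rw [← mem_reps hk]
  exact Nat.card_eq_finsetCard _

theorem card_reps_mul_le {j : ℕ} (hj : j ≠ 0) (k n : ℕ) :
    #(reps (j * k) n) ≤ #(reps k n) := by
  rcases eq_or_ne k 0 with rfl | hk
  · simp
  refine card_le_card_of_injOn (fun p => (p.1 ^ j, p.2 ^ j)) (fun p hp => ?_)
    fun p _ q _ hpq => ?_
  · rw [mem_coe, mem_reps (mul_ne_zero hj hk)] at hp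
    rw [mem_coe, mem_reps hk, ← pow_mul, ← pow_mul]
    exact ⟨pow_pos hp.1 j, pow_pos hp.2.1 j, hp.2.2⟩
  · simp only [Prod.mk.injEq] at hpq
    exact Prod.ext (Nat.pow_left_injective hj hpq.1) (Nat.pow_left_injective hj hpq.2)

theorem card_reps_le_of_odd {k : ℕ} (hk : 2 ≤ k) (hodd : Odd k) (n : ℕ) :
    #(reps k n) ≤ 2 * #n.divisors := by
  rw [mul_comm, ← Fintype.card_bool, ← card_univ, ← card_product]
  refine card_le_card_of_injOn (fun p => (p.1 + p.2, decide (p.1 ≤ p.2)))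
    (fun p hp => ?_) fun p hp q hq hpq => ?_
  · rw [mem_coe, mem_reps (by omega)] at hp
    simp only [mem_coe, mem_product, Nat.mem_divisors, mem_univ, and_true]
    exact ⟨hp.2.2 ▸ Odd.nat_add_dvd_pow_add_pow _ _ hodd, by have := pow_pos hp.1 k; omega⟩
  · rw [mem_coe, mem_reps (by omega)] at hp hq
    simp only [Prod.mk.injEq, decide_eq_decide] at hpq
    by_cases hp12 : p.1 ≤ p.2
    · have := Nat.eq_of_add_eq_of_pow_add_pow_eq hk hp12 (hpq.2.mp hp12) hpq.1
        (hp.2.2.trans hq.2.2.symm)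
      exact Prod.ext this (by omega)
    · have := Nat.eq_of_add_eq_of_pow_add_pow_eq hk (a := p.2) (b := p.1) (c := q.2) (d := q.1)
        (by omega) (by rw [hpq.2] at hp12; omega) (by omega)
        (by rw [add_comm, hp.2.2, add_comm, hq.2.2])
      exact Prod.ext (by omega) this

theorem card_coprime_reps_two_le (m : ℕ) [NeZero m] :
    #{p ∈ reps 2 m | p.1.Coprime p.2} ≤ #{z : ZMod m | z ^ 2 = -1} := by
  have hmem : ∀ p ∈ ({p ∈ reps 2 m | p.1.Coprime p.2} : Finset _),
      0 < p.1 ∧ 0 < p.2 ∧ p.1 ^ 2 + p.2 ^ 2 = m ∧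
        (p.2 : ZMod m) * (p.2 : ZMod m)⁻¹ = 1 := by
    intro p hp
    rw [mem_filter, mem_reps two_ne_zero] at hp
    obtain ⟨⟨ha, hb, hm⟩, hcop⟩ := hp
    refine ⟨ha, hb, hm, ZMod.coe_mul_inv_eq_one _ ?_⟩
    rw [← hm, sq p.2, Nat.coprime_add_mul_left_right]
    exact hcop.symm.pow_right 2
  refine card_le_card_of_injOn (fun p => (p.1 : ZMod m) * (p.2 : ZMod m)⁻¹)
    (fun p hp => ?_) fun p hp q hq hpq => ?_
  · obtain ⟨-, -, hm, hinv⟩ := hmem p hp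
    have hzero : (p.1 : ZMod m) ^ 2 + (p.2 : ZMod m) ^ 2 = 0 := by
      exact_mod_cast (congrArg (Nat.cast : ℕ → ZMod m) hm).trans (ZMod.natCast_self m)
    simp only [coe_filter, Set.mem_ofPred_eq, mem_univ, true_and]
    linear_combination (p.2 : ZMod m)⁻¹ ^ 2 * hzero - (p.2 * (p.2 : ZMod m)⁻¹ + 1) * hinv
  · obtain ⟨ha, hb, hm, hbinv⟩ := hmem p hp
    obtain ⟨hc, hd, hm', hdinv⟩ := hmem q hq
    have hcross : ((p.1 * q.2 : ℕ) : ZMod m) = ((q.1 * p.2 : ℕ) : ZMod m) := by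
      push_cast
      linear_combination (-(p.1 : ZMod m) * q.2) * hbinv + (q.2 * p.2 : ZMod m) * hpq
        + (q.1 * p.2 : ZMod m) * hdinv
    obtain ⟨h₁, h₂⟩ := Nat.eq_of_sq_add_sq_eq_of_mul_modEq ha hb hc hd hm hm'
      ((ZMod.natCast_eq_natCast_iff _ _ _).mp hcross)
    exact Prod.ext h₁ h₂

theorem card_reps_two_gcd_eq_le (n g : ℕ) :
    #{p ∈ reps 2 n | p.1.gcd p.2 = g} ≤ #{p ∈ reps 2 (n / g ^ 2) | p.1.Coprime p.2} := by
  refine card_le_card_of_injOn (fun p => (p.1 / g, p.2 / g)) (fun p hp => ?_)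
    fun p hp q hq hpq => ?_
  · simp only [coe_filter, Set.mem_ofPred_eq, mem_reps two_ne_zero] at hp ⊢
    obtain ⟨⟨ha, hb, rfl⟩, rfl⟩ := hp
    set g := p.1.gcd p.2
    have hg : 0 < g := Nat.gcd_pos_of_pos_left _ ha
    have hx : g * (p.1 / g) = p.1 := Nat.mul_div_cancel' (Nat.gcd_dvd_left _ _)
    have hy : g * (p.2 / g) = p.2 := Nat.mul_div_cancel' (Nat.gcd_dvd_right _ _)
    refine ⟨⟨Nat.div_pos (Nat.le_of_dvd ha (Nat.gcd_dvd_left _ _)) hg,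
      Nat.div_pos (Nat.le_of_dvd hb (Nat.gcd_dvd_right _ _)) hg, ?_⟩,
      Nat.coprime_div_gcd_div_gcd hg⟩
    conv_rhs => rw [← hx, ← hy, mul_pow, mul_pow, ← mul_add]
    exact (Nat.mul_div_cancel_left _ (pow_pos hg 2)).symm
  · simp only [coe_filter, Set.mem_ofPred_eq, Prod.mk.injEq] at hp hq hpq
    obtain ⟨-, rfl⟩ := hp
    rw [Nat.div_left_inj (Nat.gcd_dvd_left _ _) (hq.2 ▸ Nat.gcd_dvd_left _ _),
      Nat.div_left_inj (Nat.gcd_dvd_right _ _) (hq.2 ▸ Nat.gcd_dvd_right _ _)] at hpq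
    exact Prod.ext hpq.1 hpq.2

theorem card_reps_two_le (n : ℕ) : #(reps 2 n) ≤ 2 * #n.divisors ^ 3 := by
  rcases eq_or_ne n 0 with rfl | hn
  · simp [reps]
  set t := {g ∈ n.divisors | g ^ 2 ∣ n}
  have hmaps : Set.MapsTo (fun p : ℕ × ℕ => p.1.gcd p.2) (reps 2 n) t := by
    intro p hp
    rw [mem_coe, mem_reps two_ne_zero] at hp
    have hsq : (p.1.gcd p.2) ^ 2 ∣ n := hp.2.2 ▸ dvd_add
      (pow_dvd_pow_of_dvd (Nat.gcd_dvd_left _ _) 2) (pow_dvd_pow_of_dvd (Nat.gcd_dvd_right _ _) 2)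
    simp only [t, coe_filter, Set.mem_ofPred_eq, Nat.mem_divisors]
    exact ⟨⟨(dvd_pow_self _ two_ne_zero).trans hsq, hn⟩, hsq⟩
  have hfibre : ∀ g ∈ t, #{p ∈ reps 2 n | p.1.gcd p.2 = g} ≤ 2 * #n.divisors ^ 2 := by
    intro g hg
    have hdvd : n / g ^ 2 ∣ n := Nat.div_dvd_of_dvd (mem_filter.mp hg).2
    have : NeZero (n / g ^ 2) := ⟨fun h => hn (Nat.eq_zero_of_zero_dvd (h ▸ hdvd))⟩
    calc #{p ∈ reps 2 n | p.1.gcd p.2 = g}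
        ≤ #{p ∈ reps 2 (n / g ^ 2) | p.1.Coprime p.2} := card_reps_two_gcd_eq_le n g
      _ ≤ #{y : ZMod (n / g ^ 2) | y ^ 2 = 1} :=
        (card_coprime_reps_two_le _).trans (ZMod.card_sq_eq_neg_one_le_card_sq_eq_one _)
      _ ≤ 2 * #(n / g ^ 2).divisors ^ 2 := ZMod.card_sq_eq_one_le _
      _ ≤ 2 * #n.divisors ^ 2 := by gcongr
  calc #(reps 2 n) = ∑ g ∈ t, #{p ∈ reps 2 n | p.1.gcd p.2 = g} :=
        card_eq_sum_card_fiberwise hmaps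
    _ ≤ #t * (2 * #n.divisors ^ 2) := sum_le_card_nsmul _ _ _ hfibre
    _ ≤ #n.divisors * (2 * #n.divisors ^ 2) := by gcongr; exact filter_subset _ _
    _ = 2 * #n.divisors ^ 3 := by ring

theorem card_reps_le {k : ℕ} (hk : 2 ≤ k) (n : ℕ) : #(reps k n) ≤ 2 * #n.divisors ^ 3 := by
  rcases Nat.even_or_odd k with ⟨j, rfl⟩ | hodd
  · calc #(reps (j + j) n) = #(reps (j * 2) n) := by rw [mul_two]
      _ ≤ #(reps 2 n) := card_reps_mul_le (by omega) 2 n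
      _ ≤ 2 * #n.divisors ^ 3 := card_reps_two_le n
  · calc #(reps k n) ≤ 2 * #n.divisors := card_reps_le_of_odd hk hodd n
      _ ≤ 2 * #n.divisors ^ 3 := by gcongr; exact Nat.le_self_pow (by norm_num) _

/-- Divisor bound: for `k ≥ 2`, the number `R_{k,2}(n)` of ordered pairs of
positive integers `(a,b)` with `a^k + b^k = n` is `O_ε(n^ε)`. -/
theorem statement11 (k : ℕ) (hk : 2 ≤ k) (ε : ℝ) (hε : 0 < ε) :
    ∃ C : ℝ, 0 < C ∧ ∀ n : ℕ, 0 < n →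
      (Nat.card {p : ℕ × ℕ // 0 < p.1 ∧ 0 < p.2 ∧ p.1 ^ k + p.2 ^ k = n} : ℝ) ≤
        C * (n : ℝ) ^ ε := by
  obtain ⟨C, hC, hdiv⟩ := Nat.card_divisors_le_mul_rpow (ε := ε / 3) (by positivity)
  refine ⟨2 * C ^ 3, by positivity, fun n _ => ?_⟩
  rw [natCard_eq_card_reps (by omega)]
  calc (#(reps k n) : ℝ) ≤ 2 * (#n.divisors : ℝ) ^ 3 := by exact_mod_cast card_reps_le hk n
    _ ≤ 2 * (C * (n : ℝ) ^ (ε / 3)) ^ 3 := by gcongr; exact hdiv n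
    _ = 2 * C ^ 3 * (n : ℝ) ^ ε := by
      rw [mul_pow, ← Real.rpow_mul_natCast (Nat.cast_nonneg n)]
      ring_nf
end

section
/- Let k, s, t and Q be positive integers and let 𝒜 be a subset of {1, 2, …, Q}. Let J₁ be the number of 2s-tuples (m₁,…,m_s,n₁,…,n_s) ∈ 𝒜^{2s} satisfying m₁^k + … + m_s^k = n₁^k + … + n_s^k, and let J₂ be the number of 2s-tuples (m₁,…,m_s,n₁,…,n_s) ∈ 𝒜^{2s} satisfying simultaneously m₁^j + … + m_s^j = n₁^j + … + n_s^j for every j with 1 ≤ j ≤ t − 1, together with m₁^k + … + m_s^k = n₁^k + … + n_s^k. Then J₁ ≤ s^{t−1} · Q^{t(t−1)/2} · J₂. -/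
/-!
Group the `s`-tuples `m ∈ 𝒜ˢ` by the value of `∑ mᵢᵏ`. Then `J₁ = ∑_v N_v²`, where `N_v` is the
size of the class of `v`. Refining each class by the vector of lower power sums
`(∑ mᵢ, …, ∑ mᵢ^{t-1})`, which takes at most `C = ∏_{1 ≤ j < t} s Qʲ` values, Cauchy–Schwarz gives
`N_v² ≤ C ∑_c N_{v,c}²`, and summing over `v` yields `J₁ ≤ C J₂`.
-/

open Finset

section Collisions

variable {α β γ : Type*} [DecidableEq β] [DecidableEq γ]

def collisionCount (T : Finset α) (f : α → β) : ℕ :=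
  #{p ∈ T ×ˢ T | f p.1 = f p.2}

theorem collisionCount_eq_sum_sq {T : Finset α} {f : α → β} {S : Finset β}
    (hS : ∀ a ∈ T, f a ∈ S) :
    collisionCount T f = ∑ v ∈ S, #{a ∈ T | f a = v} ^ 2 := by
  rw [collisionCount, card_eq_sum_card_fiberwise (f := fun p => f p.1) (t := S)
    fun p hp => hS _ (mem_product.mp (mem_filter.mp hp).1).1]
  refine sum_congr rfl fun v _ => ?_
  rw [sq, ← card_product]
  congr 1
  ext ⟨a, b⟩
  simp only [mem_filter, mem_product]
  constructor
  · rintro ⟨⟨⟨ha, hb⟩, hab⟩, hav⟩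
    exact ⟨⟨ha, hav⟩, hb, hab ▸ hav⟩
  · rintro ⟨⟨ha, hav⟩, hb, hbv⟩
    exact ⟨⟨⟨ha, hb⟩, hav.trans hbv.symm⟩, hav⟩

theorem collisionCount_le_card_image_mul (T : Finset α) (f : α → β) (g : α → γ) :
    collisionCount T f ≤ #(T.image g) * collisionCount T (fun a => (f a, g a)) := by
  have hfiber (v : β) :
      #{a ∈ T | f a = v} = ∑ c ∈ T.image g, #{a ∈ T | (f a, g a) = (v, c)} := by
    rw [card_eq_sum_card_fiberwise fun a ha => mem_image_of_mem g (mem_filter.mp ha).1]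
    simp only [filter_filter, Prod.mk.injEq]
  rw [collisionCount_eq_sum_sq (S := T.image f) fun a ha => mem_image_of_mem f ha,
    collisionCount_eq_sum_sq (S := T.image f ×ˢ T.image g)
      fun a ha => mem_product.mpr ⟨mem_image_of_mem f ha, mem_image_of_mem g ha⟩,
    sum_product, mul_sum]
  refine sum_le_sum fun v _ => ?_
  rw [hfiber]
  exact sq_sum_le_card_mul_sum_sq

end Collisions

def powerSums {s : ℕ} (n : ℕ) (m : Fin s → ℕ) : Fin n → ℕ :=
  fun j => ∑ i, m i ^ (j.1 + 1)

theorem powerSums_eq_powerSums_iff {s n : ℕ} {m m' : Fin s → ℕ} :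
    powerSums n m = powerSums n m' ↔
      ∀ j : ℕ, 1 ≤ j → j ≤ n → ∑ i, m i ^ j = ∑ i, m' i ^ j := by
  simp only [powerSums, funext_iff]
  constructor
  · intro h j hj₁ hj₂
    simpa [Nat.sub_add_cancel hj₁] using h ⟨j - 1, by omega⟩
  · exact fun h j => h _ (by omega) j.2

theorem sum_pow_mem_Icc {s Q : ℕ} {𝒜 : Finset ℕ} (h𝒜 : 𝒜 ⊆ Icc 1 Q) {m : Fin s → ℕ}
    (hm : ∀ i, m i ∈ 𝒜) (j : ℕ) : ∑ i, m i ^ j ∈ Icc s (s * Q ^ j) := by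
  have hmQ (i : Fin s) : 1 ≤ m i ∧ m i ≤ Q := mem_Icc.mp (h𝒜 (hm i))
  rw [mem_Icc]
  constructor
  · calc s = ∑ _i : Fin s, 1 := by simp
      _ ≤ ∑ i, m i ^ j := sum_le_sum fun i _ => Nat.one_le_pow _ _ (hmQ i).1
  · calc ∑ i, m i ^ j ≤ ∑ _i : Fin s, Q ^ j :=
          sum_le_sum fun i _ => Nat.pow_le_pow_left (hmQ i).2 _
      _ = s * Q ^ j := by simp

theorem prod_range_mul_pow_succ (s Q n : ℕ) :
    ∏ j ∈ range n, s * Q ^ (j + 1) = s ^ n * Q ^ ((n + 1) * n / 2) := by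
  have hgauss := sum_range_id (n + 1)
  simp only [sum_range_succ', add_zero, add_tsub_cancel_right] at hgauss
  rw [prod_mul_distrib, prod_const, card_range, prod_pow_eq_pow_sum, hgauss]

theorem card_image_powerSums_le {s Q : ℕ} (hs : 0 < s) {𝒜 : Finset ℕ} (h𝒜 : 𝒜 ⊆ Icc 1 Q)
    (n : ℕ) :
    #((Fintype.piFinset fun _ : Fin s => 𝒜).image (powerSums n)) ≤
      s ^ n * Q ^ ((n + 1) * n / 2) := by
  have himage : (Fintype.piFinset fun _ : Fin s => 𝒜).image (powerSums n) ⊆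
      Fintype.piFinset fun j : Fin n => Icc s (s * Q ^ (j.1 + 1)) := by
    intro c hc
    obtain ⟨m, hm, rfl⟩ := mem_image.mp hc
    rw [Fintype.mem_piFinset] at hm ⊢
    exact fun j => sum_pow_mem_Icc h𝒜 hm _
  calc _ ≤ ∏ j : Fin n, #(Icc s (s * Q ^ (j.1 + 1))) :=
        (card_le_card himage).trans_eq (Fintype.card_piFinset _)
    _ ≤ ∏ j : Fin n, s * Q ^ (j.1 + 1) := prod_le_prod' fun j _ => by simp; omega
    _ = s ^ n * Q ^ ((n + 1) * n / 2) := by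
        rw [Fin.prod_univ_eq_prod_range (fun j => s * Q ^ (j + 1)), prod_range_mul_pow_succ]

theorem natCard_solutions_eq_card_filter {s : ℕ} (𝒜 : Finset ℕ)
    (P : (Fin s → ℕ) × (Fin s → ℕ) → Prop) [DecidablePred P] :
    Nat.card {p : (Fin s → ℕ) × (Fin s → ℕ) // (∀ i, p.1 i ∈ 𝒜) ∧ (∀ i, p.2 i ∈ 𝒜) ∧ P p} =
      #{p ∈ (Fintype.piFinset fun _ => 𝒜) ×ˢ (Fintype.piFinset fun _ => 𝒜) | P p} := by
  rw [← Nat.card_eq_finsetCard]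
  refine Nat.card_congr (Equiv.subtypeEquivRight fun p => ?_)
  simp only [mem_filter, mem_product, Fintype.mem_piFinset, and_assoc]

theorem statement14_general (k s t Q : ℕ) (hs : 0 < s)
    (𝒜 : Finset ℕ) (h𝒜 : 𝒜 ⊆ Finset.Icc 1 Q) :
    Nat.card {p : (Fin s → ℕ) × (Fin s → ℕ) //
        (∀ i, p.1 i ∈ 𝒜) ∧ (∀ i, p.2 i ∈ 𝒜) ∧
        ∑ i, p.1 i ^ k = ∑ i, p.2 i ^ k} ≤
      s ^ (t - 1) * Q ^ (t * (t - 1) / 2) *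
        Nat.card {p : (Fin s → ℕ) × (Fin s → ℕ) //
          (∀ i, p.1 i ∈ 𝒜) ∧ (∀ i, p.2 i ∈ 𝒜) ∧
          (∀ j : ℕ, 1 ≤ j → j ≤ t - 1 → ∑ i, p.1 i ^ j = ∑ i, p.2 i ^ j) ∧
          ∑ i, p.1 i ^ k = ∑ i, p.2 i ^ k} := by
  set T := Fintype.piFinset fun _ : Fin s => 𝒜
  set f : (Fin s → ℕ) → ℕ := fun m => ∑ i, m i ^ k
  have hJ₂ : Nat.card {p : (Fin s → ℕ) × (Fin s → ℕ) //
        (∀ i, p.1 i ∈ 𝒜) ∧ (∀ i, p.2 i ∈ 𝒜) ∧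
        (∀ j : ℕ, 1 ≤ j → j ≤ t - 1 → ∑ i, p.1 i ^ j = ∑ i, p.2 i ^ j) ∧
        ∑ i, p.1 i ^ k = ∑ i, p.2 i ^ k} =
      collisionCount T fun m => (f m, powerSums (t - 1) m) := by
    rw [natCard_solutions_eq_card_filter, collisionCount]
    simp only [Prod.mk.injEq, powerSums_eq_powerSums_iff, and_comm, f]
    rfl
  have hexp : t * (t - 1) / 2 = (t - 1 + 1) * (t - 1) / 2 := by
    rcases t with _ | t <;> simp
  rw [natCard_solutions_eq_card_filter, hJ₂, hexp]
  exact (collisionCount_le_card_image_mul T f _).trans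
    (Nat.mul_le_mul_right _ (card_image_powerSums_le hs h𝒜 _))

/-- Inflating one equation to a partial Vinogradov system: with `𝒜 ⊆ {1,…,Q}`,
the number `J₁` of solutions of `m₁^k+…+m_s^k = n₁^k+…+n_s^k` in `𝒜` is at most
`s^{t−1} Q^{t(t−1)/2}` times the number `J₂` of solutions of the system where
additionally `m₁^j+…+m_s^j = n₁^j+…+n_s^j` for all `1 ≤ j ≤ t−1`. -/
theorem statement14 (k s t Q : ℕ) (hk : 0 < k) (hs : 0 < s) (ht : 0 < t) (hQ : 0 < Q)
    (𝒜 : Finset ℕ) (h𝒜 : 𝒜 ⊆ Finset.Icc 1 Q) :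
    Nat.card {p : (Fin s → ℕ) × (Fin s → ℕ) //
        (∀ i, p.1 i ∈ 𝒜) ∧ (∀ i, p.2 i ∈ 𝒜) ∧
        ∑ i, p.1 i ^ k = ∑ i, p.2 i ^ k} ≤
      s ^ (t - 1) * Q ^ (t * (t - 1) / 2) *
        Nat.card {p : (Fin s → ℕ) × (Fin s → ℕ) //
          (∀ i, p.1 i ∈ 𝒜) ∧ (∀ i, p.2 i ∈ 𝒜) ∧
          (∀ j : ℕ, 1 ≤ j → j ≤ t - 1 → ∑ i, p.1 i ^ j = ∑ i, p.2 i ^ j) ∧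
          ∑ i, p.1 i ^ k = ∑ i, p.2 i ^ k} :=
  statement14_general k s t Q hs 𝒜 h𝒜
end

section
/- Let k and s be positive integers. There exists a constant C > 0, depending only on k and s, such that the following holds: for every real x ≥ 1, every real δ with 0 < δ ≤ 1/(2x^k), and all coprime positive integers a₀, q₀ with x/2 < q₀ ≤ x, the number of integers q with s(x/2)^k < q ≤ s x^k for which there exists an integer b with |b| < s δ x^{2k} and a₀ q ≡ b (mod q₀^k), is at most C · (1 + x^{2k} δ). -/
/-!
Since `a₀` is invertible modulo `m = q₀ ^ k`, an integer `q` is determined by the residue of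
`a₀ q` modulo `m` together with the quotient `q / m`. The residue is that of an integer `b` with
`|b| < B = s δ x ^ (2k)`, leaving at most `2B + 1` choices, and `q ≤ s x ^ k ≤ s 2 ^ k m` leaves
at most `s 2 ^ k + 1` choices for the quotient.
-/

open Finset

theorem card_filter_exists_modEq_le {m : ℕ} {a : ℤ} (ha : IsCoprime a m) (I : Finset ℤ) (L : ℕ) :
    #{q ∈ range (m * L) | ∃ b ∈ I, a * ((q : ℕ) : ℤ) ≡ b [ZMOD m]} ≤ #I * L := by
  calc _ ≤ #(I.image (· % (m : ℤ)) ×ˢ range L) := by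
        refine card_le_card_of_injOn (fun q : ℕ ↦ (a * q % m, q / m)) ?_ ?_
        · intro q hq
          simp only [coe_filter, mem_range, Set.mem_ofPred_eq] at hq
          obtain ⟨hqL, b, hb, hab⟩ := hq
          exact mem_product.2 ⟨mem_image.2 ⟨b, hb, hab.symm⟩,
            mem_range.2 (Nat.div_lt_of_lt_mul hqL)⟩
        · intro q₁ _ q₂ _ h
          simp only [Prod.mk.injEq] at h
          have hdvd : (m : ℤ) ∣ q₂ - q₁ := ha.symm.dvd_of_dvd_mul_left <| by
            rw [mul_sub]; exact Int.modEq_iff_dvd.1 h.1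
          have hmod : q₁ % m = q₂ % m := Int.natCast_modEq_iff.1 (Int.modEq_iff_dvd.2 hdvd)
          rw [← Nat.div_add_mod q₁ m, ← Nat.div_add_mod q₂ m, h.2, hmod]
    _ ≤ #I * L := by
        rw [card_product, card_range]
        exact Nat.mul_le_mul_right _ card_image_le

theorem card_Ioo_neg_ceil_ceil_le {B : ℝ} (hB : 0 ≤ B) :
    (#(Ioo (-⌈B⌉) ⌈B⌉) : ℝ) ≤ 2 * B + 1 := by
  have hceil : (⌈B⌉ : ℝ) < B + 1 := Int.ceil_lt_add_one B
  rw [Int.card_Ioo]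
  rcases le_or_gt 0 (⌈B⌉ - -⌈B⌉ - 1) with h | h
  · rw [← Int.cast_natCast, Int.toNat_of_nonneg h]; push_cast; linarith
  · rw [Int.toNat_of_nonpos h.le]; push_cast; linarith

theorem mem_Ioo_neg_ceil_ceil_of_abs_lt {b : ℤ} {B : ℝ} (hb : |(b : ℝ)| < B) :
    b ∈ Ioo (-⌈B⌉) ⌈B⌉ := by
  rw [abs_lt] at hb
  rw [mem_Ioo, neg_lt, Int.lt_ceil, Int.lt_ceil]
  push_cast
  constructor <;> linarith

theorem Nat.card_subtype_le_finset_card {α : Type*} {P : α → Prop} (s : Finset α)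
    (h : ∀ a, P a → a ∈ s) :
    Nat.card {a // P a} ≤ #s := by
  rw [← Set.coe_ofPred, Nat.card_coe_set_eq, ← Set.ncard_coe_finset]
  exact Set.ncard_le_ncard h s.finite_toSet

theorem statement15_general (k s : ℕ) :
    ∃ C : ℝ, 0 < C ∧
      ∀ (x δ : ℝ) (a₀ q₀ : ℕ), 1 ≤ x → 0 < δ → δ ≤ 1 / (2 * x ^ k) →
        0 < a₀ → 0 < q₀ → Nat.Coprime a₀ q₀ → x / 2 < (q₀ : ℝ) → (q₀ : ℝ) ≤ x →
        (Nat.card {q : ℕ //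
            (s : ℝ) * (x / 2) ^ k < (q : ℝ) ∧ (q : ℝ) ≤ (s : ℝ) * x ^ k ∧
            ∃ b : ℤ, |(b : ℝ)| < (s : ℝ) * δ * x ^ (2 * k) ∧
              (a₀ : ℤ) * (q : ℤ) ≡ b [ZMOD ((q₀ : ℤ) ^ k)]} : ℝ) ≤
          C * (1 + x ^ (2 * k) * δ) := by
  refine ⟨(2 * s + 1) * (s * 2 ^ k + 1), by positivity, ?_⟩
  intro x δ a₀ q₀ hx hδ _ _ hq₀ hcop hlo _
  set B : ℝ := s * δ * x ^ (2 * k)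
  set L : ℕ := s * 2 ^ k + 1
  have hq_lt : ∀ q : ℕ, (q : ℝ) ≤ s * x ^ k → q < q₀ ^ k * L := by
    intro q hq
    have hm : (1 : ℝ) ≤ (q₀ : ℝ) ^ k := one_le_pow₀ (by exact_mod_cast hq₀)
    have hxq : x ^ k ≤ 2 ^ k * (q₀ : ℝ) ^ k := by
      rw [← mul_pow]; exact pow_le_pow_left₀ (by linarith) (by linarith) k
    have : (q : ℝ) < (q₀ : ℝ) ^ k * L := by
      calc (q : ℝ) ≤ s * (2 ^ k * (q₀ : ℝ) ^ k) := hq.trans (by gcongr)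
        _ < (q₀ : ℝ) ^ k * L := by push_cast [L]; nlinarith
    exact_mod_cast this
  have hB : 2 * B + 1 ≤ (2 * s + 1) * (1 + x ^ (2 * k) * δ) := by
    have : 0 ≤ x ^ (2 * k) * δ := by positivity
    nlinarith
  calc _ ≤ (#(Ioo (-⌈B⌉) ⌈B⌉) * L : ℝ) := by
        refine mod_cast (Nat.card_subtype_le_finset_card _ ?_).trans
          (card_filter_exists_modEq_le (Nat.isCoprime_iff_coprime.2 (hcop.pow_right k)) _ L)
        rintro q ⟨-, hq, b, hb, hmod⟩
        exact mem_filter.2 ⟨mem_range.2 (hq_lt q hq), b,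
          mem_Ioo_neg_ceil_ceil_of_abs_lt (mod_cast hb), by push_cast; exact hmod⟩
    _ ≤ (2 * B + 1) * L := by gcongr; exact card_Ioo_neg_ceil_ceil_le (by positivity)
    _ ≤ _ := by rw [mul_right_comm]; push_cast [L]; gcongr

/-- Bound on `|ℬ*_{k,s}(x,δ,a₀,q₀)|`: the number of integers
`q ∈ (s(x/2)^k, sx^k]` admitting `b ∈ ℤ` with `|b| < sδx^{2k}` and
`a₀q ≡ b (mod q₀^k)` is `O_{k,s}(1 + x^{2k}δ)`. -/
theorem statement15 (k s : ℕ) (hk : 0 < k) (hs : 0 < s) :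
    ∃ C : ℝ, 0 < C ∧
      ∀ (x δ : ℝ) (a₀ q₀ : ℕ), 1 ≤ x → 0 < δ → δ ≤ 1 / (2 * x ^ k) →
        0 < a₀ → 0 < q₀ → Nat.Coprime a₀ q₀ → x / 2 < (q₀ : ℝ) → (q₀ : ℝ) ≤ x →
        (Nat.card {q : ℕ //
            (s : ℝ) * (x / 2) ^ k < (q : ℝ) ∧ (q : ℝ) ≤ (s : ℝ) * x ^ k ∧
            ∃ b : ℤ, |(b : ℝ)| < (s : ℝ) * δ * x ^ (2 * k) ∧
              (a₀ : ℤ) * (q : ℤ) ≡ b [ZMOD ((q₀ : ℤ) ^ k)]} : ℝ) ≤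
          C * (1 + x ^ (2 * k) * δ) :=
  statement15_general k s
end

section
/- Let k be a positive integer, x ≥ 1 a real number, and δ a real number with 0 < δ ≤ 1/(2x^k). Let a₀, q₀ be coprime positive integers with a₀ ≤ q₀^k and x/2 < q₀ ≤ x, and set α₀ = a₀/q₀^k. Define 𝒜_k(x) = {a/q^k : q, a positive integers with x/2 < q ≤ x, a ≤ q^k, gcd(a,q) = 1}, and define 𝒜*_k to be the set of positive integers q with x/2 < q ≤ x for which there exists an integer b with |b| < δ x^{2k} and a₀ q^k ≡ b (mod q₀^k). Then the map sending a reduced fraction a/q^k ∈ 𝒜_k(x) with |a/q^k − α₀| < δ to its denominator parameter q is a well-defined injection from {α ∈ 𝒜_k(x) : |α − α₀| < δ} into 𝒜*_k; in particular |{α ∈ 𝒜_k(x) : |α − α₀| < δ}| ≤ |𝒜*_k|. -/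
/-! A fraction `a / q ^ k` in lowest terms determines `q`, so `α ↦ q` is well defined on
`𝒜_k(x)`. Clearing denominators in `|a / q ^ k - a₀ / q₀ ^ k| < δ` gives an integer
`b = a₀ q ^ k - a q₀ ^ k ≡ a₀ q ^ k (mod q₀ ^ k)` with `|b| < δ q ^ k q₀ ^ k ≤ δ x ^ {2k}`, so
`q ∈ 𝒜*_k`. Two fractions with the same denominator `q ^ k` differ by at least `q ^ {-k} ≥ 2δ`
unless equal, so two of them within `δ` of `α₀` coincide. -/

/-- `𝒜_k(x) = {a/q^k : x/2 < q ≤ x, 1 ≤ a ≤ q^k, gcd(a,q)=1}` as a set of reals. -/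
def Aset (k : ℕ) (x : ℝ) : Set ℝ :=
  {α | ∃ q a : ℕ, 0 < q ∧ x / 2 < (q : ℝ) ∧ (q : ℝ) ≤ x ∧ 0 < a ∧ a ≤ q ^ k ∧
    Nat.Coprime a q ∧ α = (a : ℝ) / (q : ℝ) ^ k}

/-- `𝒜*_k(x,δ,a₀,q₀)`: integers `q ∈ (x/2, x]` for which there is `b ∈ ℤ` with
`|b| < δx^{2k}` and `a₀q^k ≡ b (mod q₀^k)`. -/
def Astar (k : ℕ) (x δ : ℝ) (a₀ q₀ : ℕ) : Set ℕ :=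
  {q | 0 < q ∧ x / 2 < (q : ℝ) ∧ (q : ℝ) ≤ x ∧
    ∃ b : ℤ, |(b : ℝ)| < δ * x ^ (2 * k) ∧
      (a₀ : ℤ) * (q : ℤ) ^ k ≡ b [ZMOD ((q₀ : ℤ) ^ k)]}

lemma eq_and_eq_of_div_pow_eq_div_pow {k q a q' a' : ℕ} (hk : k ≠ 0) (hq : 0 < q)
    (hq' : 0 < q') (hc : Nat.Coprime a q) (hc' : Nat.Coprime a' q')
    (h : (a : ℝ) / (q : ℝ) ^ k = (a' : ℝ) / (q' : ℝ) ^ k) : q = q' ∧ a = a' := by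
  have hcross : a * q' ^ k = a' * q ^ k := by
    rw [div_eq_div_iff (by positivity) (by positivity)] at h
    exact_mod_cast h
  have hdvd : q ^ k ∣ q' ^ k :=
    (hc.symm.pow_left k).dvd_of_dvd_mul_left (hcross ▸ dvd_mul_left _ _)
  have hdvd' : q' ^ k ∣ q ^ k :=
    (hc'.symm.pow_left k).dvd_of_dvd_mul_left (hcross.symm ▸ dvd_mul_left _ _)
  obtain rfl : q = q' := Nat.pow_left_injective hk (Nat.dvd_antisymm hdvd hdvd')
  exact ⟨rfl, Nat.eq_of_mul_eq_mul_right (pow_pos hq k) hcross⟩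

open Classical in
/-- The base `q` of the denominator of `α = a / q ^ k` written in lowest terms
(and `0` if `α` has no such form). -/
noncomputable def reducedDenomBase (k : ℕ) (α : ℝ) : ℕ :=
  if h : ∃ q a : ℕ, 0 < q ∧ Nat.Coprime a q ∧ α = (a : ℝ) / (q : ℝ) ^ k then h.choose else 0

lemma reducedDenomBase_eq {k q a : ℕ} {α : ℝ} (hk : k ≠ 0) (hq : 0 < q)
    (hc : Nat.Coprime a q) (hα : α = (a : ℝ) / (q : ℝ) ^ k) : reducedDenomBase k α = q := by
  have h : ∃ q a : ℕ, 0 < q ∧ Nat.Coprime a q ∧ α = (a : ℝ) / (q : ℝ) ^ k := ⟨q, a, hq, hc, hα⟩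
  obtain ⟨a', hq', hc', hα'⟩ := h.choose_spec
  rw [reducedDenomBase, dif_pos h]
  exact (eq_and_eq_of_div_pow_eq_div_pow hk hq' hq hc' hc (hα'.symm.trans hα)).1

lemma abs_mul_sub_mul_lt_of_abs_div_sub_div_lt {a b Q R δ : ℝ} (hQ : 0 < Q) (hR : 0 < R)
    (h : |a / Q - b / R| < δ) : |b * Q - a * R| < δ * (Q * R) := by
  have hdiff : a / Q - b / R = -(b * Q - a * R) / (Q * R) := by
    field_simp
    ring
  rwa [hdiff, abs_div, abs_neg, abs_of_pos (mul_pos hQ hR), div_lt_iff₀ (mul_pos hQ hR)] at h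

lemma eq_of_abs_div_sub_div_lt_inv {a b : ℕ} {Q : ℝ} (hQ : 0 < Q)
    (h : |(a : ℝ) / Q - (b : ℝ) / Q| < 1 / Q) : a = b := by
  rw [← sub_div, abs_div, abs_of_pos hQ, div_lt_div_iff_of_pos_right hQ] at h
  have habs : |(a : ℤ) - b| < 1 := by exact_mod_cast h
  exact_mod_cast sub_eq_zero.mp (Int.abs_lt_one_iff.mp habs)

lemma mem_Astar_of_abs_sub_lt {k q₀ q a a₀ : ℕ} {x δ : ℝ} (hq₀ : 0 < q₀) (hq₀x : (q₀ : ℝ) ≤ x)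
    (hq : 0 < q) (hxq : x / 2 < (q : ℝ)) (hqx : (q : ℝ) ≤ x)
    (hclose : |(a : ℝ) / (q : ℝ) ^ k - (a₀ : ℝ) / (q₀ : ℝ) ^ k| < δ) :
    q ∈ Astar k x δ a₀ q₀ := by
  have hδ : 0 ≤ δ := (abs_nonneg _).trans hclose.le
  have hcleared := abs_mul_sub_mul_lt_of_abs_div_sub_div_lt (by positivity) (by positivity) hclose
  have hdenom : (q : ℝ) ^ k * (q₀ : ℝ) ^ k ≤ x ^ (2 * k) := by
    have hx : 0 ≤ x := (Nat.cast_nonneg q₀).trans hq₀x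
    rw [two_mul, pow_add]
    gcongr
  refine ⟨hq, hxq, hqx, a₀ * q ^ k - a * q₀ ^ k, ?_, Int.modEq_iff_dvd.mpr ⟨-a, by ring⟩⟩
  push_cast
  exact hcleared.trans_le (mul_le_mul_of_nonneg_left hdenom hδ)

lemma injOn_reducedDenomBase {k : ℕ} {x δ c : ℝ} (hk : k ≠ 0) (hδx : δ ≤ 1 / (2 * x ^ k)) :
    Set.InjOn (reducedDenomBase k) {α ∈ Aset k x | |α - c| < δ} := by
  rintro _ ⟨⟨q, a, hq, -, hqx, -, -, hc, rfl⟩, hα⟩ _ ⟨⟨q', a', hq', -, -, -, -, hc', rfl⟩, hβ⟩ hqq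
  rw [reducedDenomBase_eq hk hq hc rfl, reducedDenomBase_eq hk hq' hc' rfl] at hqq
  subst hqq
  have hx : 0 < x := by
    have : (1 : ℝ) ≤ q := by exact_mod_cast hq
    linarith
  have hgap : 2 * δ ≤ 1 / (q : ℝ) ^ k :=
    calc 2 * δ ≤ 2 * (1 / (2 * x ^ k)) := by linarith
      _ = 1 / x ^ k := by field_simp
      _ ≤ 1 / (q : ℝ) ^ k := by gcongr
  have hsub : |(a : ℝ) / (q : ℝ) ^ k - (a' : ℝ) / (q : ℝ) ^ k| < 1 / (q : ℝ) ^ k := by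
    rw [abs_lt] at hα hβ ⊢
    constructor <;> linarith
  rw [eq_of_abs_div_sub_div_lt_inv (by positivity) hsub]

lemma Astar_finite (k : ℕ) (x δ : ℝ) (a₀ q₀ : ℕ) : (Astar k x δ a₀ q₀).Finite :=
  (Set.finite_Iic ⌊x⌋₊).subset fun _ ⟨_, _, hqx, _⟩ => Nat.le_floor hqx

theorem statement16_general (k : ℕ) (hk : 0 < k) (x δ : ℝ)
    (hδx : δ ≤ 1 / (2 * x ^ k)) (a₀ q₀ : ℕ) (hq₀ : 0 < q₀)
    (hq₀le : (q₀ : ℝ) ≤ x) :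
    (∃ f : ℝ → ℕ,
      (∀ α ∈ {α ∈ Aset k x | |α - (a₀ : ℝ) / (q₀ : ℝ) ^ k| < δ},
        (∀ q a : ℕ, 0 < q → x / 2 < (q : ℝ) → (q : ℝ) ≤ x → 0 < a → a ≤ q ^ k →
          Nat.Coprime a q → α = (a : ℝ) / (q : ℝ) ^ k → f α = q) ∧
        f α ∈ Astar k x δ a₀ q₀) ∧
      Set.InjOn f {α ∈ Aset k x | |α - (a₀ : ℝ) / (q₀ : ℝ) ^ k| < δ}) ∧
    Set.ncard {α ∈ Aset k x | |α - (a₀ : ℝ) / (q₀ : ℝ) ^ k| < δ} ≤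
      Set.ncard (Astar k x δ a₀ q₀) := by
  have hmaps : ∀ α ∈ {α ∈ Aset k x | |α - (a₀ : ℝ) / (q₀ : ℝ) ^ k| < δ},
      reducedDenomBase k α ∈ Astar k x δ a₀ q₀ := by
    rintro _ ⟨⟨q, a, hq, hxq, hqx, -, -, hc, rfl⟩, hclose⟩
    rw [reducedDenomBase_eq hk.ne' hq hc rfl]
    exact mem_Astar_of_abs_sub_lt hq₀ hq₀le hq hxq hqx hclose
  have hinj := injOn_reducedDenomBase (c := (a₀ : ℝ) / (q₀ : ℝ) ^ k) hk.ne' hδx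
  refine ⟨⟨reducedDenomBase k, fun α hα => ⟨?_, hmaps α hα⟩, hinj⟩,
    Set.ncard_le_ncard_of_injOn _ hmaps hinj (Astar_finite k x δ a₀ q₀)⟩
  intro q a hq _ _ _ _ hc hα
  exact reducedDenomBase_eq hk.ne' hq hc hα

/-- The map `a/q^k ↦ q` is a well-defined injection from
`{α ∈ 𝒜_k(x) : |α − α₀| < δ}` into `𝒜*_k(x,δ,a₀,q₀)`; in particular the first
set has cardinality at most that of the second. -/
theorem statement16 (k : ℕ) (hk : 0 < k) (x δ : ℝ) (hx : 1 ≤ x) (hδ : 0 < δ)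
    (hδx : δ ≤ 1 / (2 * x ^ k)) (a₀ q₀ : ℕ) (ha₀ : 0 < a₀) (hq₀ : 0 < q₀)
    (hcop : Nat.Coprime a₀ q₀) (ha₀le : a₀ ≤ q₀ ^ k)
    (hq₀lt : x / 2 < (q₀ : ℝ)) (hq₀le : (q₀ : ℝ) ≤ x) :
    (∃ f : ℝ → ℕ,
      (∀ α ∈ {α ∈ Aset k x | |α - (a₀ : ℝ) / (q₀ : ℝ) ^ k| < δ},
        (∀ q a : ℕ, 0 < q → x / 2 < (q : ℝ) → (q : ℝ) ≤ x → 0 < a → a ≤ q ^ k →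
          Nat.Coprime a q → α = (a : ℝ) / (q : ℝ) ^ k → f α = q) ∧
        f α ∈ Astar k x δ a₀ q₀) ∧
      Set.InjOn f {α ∈ Aset k x | |α - (a₀ : ℝ) / (q₀ : ℝ) ^ k| < δ}) ∧
    Set.ncard {α ∈ Aset k x | |α - (a₀ : ℝ) / (q₀ : ℝ) ^ k| < δ} ≤
      Set.ncard (Astar k x δ a₀ q₀) :=
  statement16_general k hk x δ hδx a₀ q₀ hq₀ hq₀le
end
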